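/- For the XXZ ansatz with cos γ = c, sin γ = s (c,s nonzero, c² + s² = 1), ξ ≠ 0, define M_{n;k,l} = ((ξ−ξ⁻¹)/((ξ+ξ⁻¹)s))·P_{n,k+1,l}(c) − (2/((ξ+ξ⁻¹)c))·P_{n,k+1,l-1}(c). Then for integers n ≥ 1, 0 ≤ k ≤ n-1, 0 ≤ l ≤ n+1 with k − l odd, the matrix element A_{k,l} = ∑_{t=0}^{n} (−1)^t M_{n;k,t} M_{n+1;t,l} equals (−1)^{k+1} c · δ_{k,l-1}. -/

import Mathlib

/-- Binomial coefficient C(a,b) for integer arguments, with the convention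
    C(a,b) = 0 when b < 0 or b > a. -/
def intChoose (a b : ℤ) : ℤ :=
  if 0 ≤ b ∧ b ≤ a then (a.toNat.choose b.toNat : ℤ) else 0

/-- P_{n,k,l}(x) = ∑_{s=0}^{l} (-1)^s C(n-k,s) C(n-s-1,l-s) x^{n-2s}, as a function of
    an (invertible) field element x; for l < 0 all terms vanish (the sum degenerates to
    the single s = 0 term containing C(n-1,l) = 0), so P_{n,k,l} = 0 for l < 0. -/
def Ppoly {K : Type*} [Field K] (x : K) (n k l : ℤ) : K :=
  ∑ s ∈ Finset.range (l.toNat + 1),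
    (-1 : K) ^ s * (intChoose (n - k) (s : ℤ) : K) *
      (intChoose (n - (s : ℤ) - 1) (l - (s : ℤ)) : K) * x ^ (n - 2 * (s : ℤ))

/-- The XXZ matrix elements
    M_{n;k,l} = ((ξ−ξ⁻¹)/((ξ+ξ⁻¹)s))·P_{n,k+1,l}(c) − (2/((ξ+ξ⁻¹)c))·P_{n,k+1,l-1}(c). -/
def MXXZ {K : Type*} [Field K] (c s ξ : K) (n k : ℕ) (l : ℤ) : K :=
  ((ξ - ξ⁻¹) / ((ξ + ξ⁻¹) * s)) * Ppoly c (n : ℤ) ((k : ℤ) + 1) l -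
    (2 / ((ξ + ξ⁻¹) * c)) * Ppoly c (n : ℤ) ((k : ℤ) + 1) (l - 1)

/-!
For `1 ≤ k ≤ n` the sequence `l ↦ P_{n,k,l}(x)` has the generating polynomial
`x^(2k-n) (1+X)^(k-1) (x²(1+X) - X)^(n-k)`, so `M_{n;k,·}` is generated by `(α - βX)` times that
of `P_{n,k+1,·}`, where `α, β` are the two weights in `MXXZ`. Since `(-1)^t P_{n+1,t+1,·}` is
generated by `x^(1-n) A^t D^(n-t)` with `A = -x²(1+X)`, `D = x²(1+X) - X`, the sum over `t` is
the homogenization of the generating polynomial of `M_{n;k,·}` evaluated at `(A, D)`. There the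
linear factors collapse (`A + D = -X`, `x²(A + D) - A = x²`), leaving
`x (-X)^k (α - βX)(αD - βA)`. At `x = c` its coefficient of `X^(k+1)` is
`(-1)^(k+1) c (α²s² + β²c²) = (-1)^(k+1) c`; its other coefficients sit at `X^k` and `X^(k+2)`,
which the parity of `k - l` excludes.
-/

open Polynomial Finset

lemma intChoose_natCast (a b : ℕ) : intChoose a b = a.choose b := by
  unfold intChoose
  split_ifs with h
  · simp
  · rw [Nat.choose_eq_zero_of_lt (by omega), Nat.cast_zero]

lemma intChoose_of_neg {a b : ℤ} (hb : b < 0) : intChoose a b = 0 :=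
  if_neg (by omega)

lemma Ppoly_of_neg {K : Type*} [Field K] (x : K) (n k : ℤ) {l : ℤ} (hl : l < 0) :
    Ppoly x n k l = 0 := by
  simp [Ppoly, Int.toNat_of_nonpos hl.le, intChoose_of_neg hl]

lemma coeff_X_pow_mul_one_add_X_pow {R : Type*} [Ring R] (s N l : ℕ) :
    (X ^ s * (1 + X) ^ N : R[X]).coeff l = intChoose N ((l : ℤ) - s) := by
  rw [coeff_X_pow_mul']
  split_ifs with h
  · rw [coeff_one_add_X_pow, ← Nat.cast_sub h, intChoose_natCast, Int.cast_natCast]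
  · rw [intChoose_of_neg (by omega), Int.cast_zero]

lemma coeff_X_pow_mul_quadratic_of_odd {R : Type*} [Semiring R] (a b d : R) {k l : ℕ}
    (hodd : Odd ((k : ℤ) - l)) :
    (X ^ k * (C a + C b * X + C d * X ^ 2)).coeff l = if l = k + 1 then b else 0 := by
  obtain ⟨m, hm⟩ := hodd
  rw [coeff_X_pow_mul']
  simp only [coeff_add, coeff_C, coeff_C_mul, coeff_X, coeff_X_pow]
  split_ifs <;> first | omega | simp

lemma Polynomial.aeval_homogenize {R S : Type*} [CommSemiring R] [CommSemiring S] [Algebra R S]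
    (p : R[X]) (n : ℕ) (g : Fin 2 → S) :
    MvPolynomial.aeval g (p.homogenize n)
      = ∑ t ∈ range (n + 1), algebraMap R S (p.coeff t) * g 0 ^ t * g 1 ^ (n - t) := by
  simp only [homogenize, map_sum, Nat.sum_antidiagonal_eq_sum_range_succ_mk,
    MvPolynomial.aeval_monomial]
  refine Finset.sum_congr rfl fun t _ => ?_
  rw [Finsupp.update_eq_add_single (by simp),
    Finsupp.prod_add_index' (by simp) (by simp [pow_add]), Finsupp.prod_single_index (by simp),
    Finsupp.prod_single_index (by simp), mul_assoc]

lemma Polynomial.homogenize_pow {R : Type*} [CommSemiring R] {p : R[X]} {d : ℕ}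
    (hp : p.natDegree ≤ d) (j : ℕ) : (p ^ j).homogenize (j * d) = p.homogenize d ^ j := by
  induction j with
  | zero => simp
  | succ j ih =>
    rw [pow_succ, add_one_mul, homogenize_mul _ _ (natDegree_pow_le_of_le j hp) hp, ih, pow_succ]

noncomputable def PpolyGen {K : Type*} [Field K] (x : K) (n k : ℕ) : K[X] :=
  C (x ^ (2 * (k : ℤ) - n)) * (1 + X) ^ (k - 1) * (C (x ^ 2) * (1 + X) - X) ^ (n - k)

noncomputable def PpolyGenPair {K : Type*} [Field K] (x : K) : Fin 2 → K[X] :=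
  ![-(C (x ^ 2) * (1 + X)), C (x ^ 2) * (1 + X) - X]

section PpolyGen

variable {K : Type*} [Field K] {x : K} {n k : ℕ}

lemma PpolyGen_eq_sum (hx : x ≠ 0) (hk : 1 ≤ k) (hkn : k ≤ n) :
    PpolyGen x n k = ∑ s ∈ range (n - k + 1),
      C ((-1) ^ s * ((n - k).choose s : K) * x ^ ((n : ℤ) - 2 * s)) *
        (X ^ s * (1 + X) ^ (n - 1 - s)) := by
  rw [PpolyGen, show C (x ^ 2) * (1 + X) - X = -X + C (x ^ 2) * (1 + X) by ring, add_pow (-X),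
    mul_sum]
  refine Finset.sum_congr rfl fun s hs => ?_
  have hs : s ≤ n - k := Nat.lt_succ_iff.mp (mem_range.mp hs)
  have hX : (1 + X : K[X]) ^ (n - 1 - s) = (1 + X) ^ (k - 1) * (1 + X) ^ (n - k - s) := by
    rw [← pow_add]; congr 1; omega
  have hx' : x ^ ((n : ℤ) - 2 * s) = x ^ (2 * (k : ℤ) - n) * (x ^ 2) ^ (n - k - s) := by
    rw [← pow_mul, ← zpow_natCast, ← zpow_add₀ hx]
    congr 1; push_cast [Nat.cast_sub hs, Nat.cast_sub hkn]; ring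
  rw [hX, hx']
  simp only [map_mul, map_pow, map_neg, map_one, map_natCast, neg_pow (X : K[X]), mul_pow]
  ring

lemma Ppoly_eq_coeff_PpolyGen (hx : x ≠ 0) (hk : 1 ≤ k) (hkn : k ≤ n) (l : ℕ) :
    Ppoly x n k l = (PpolyGen x n k).coeff l := by
  set f : ℕ → K := fun s => (-1) ^ s * ((n - k).choose s : K) *
    (intChoose ((n : ℤ) - s - 1) ((l : ℤ) - s) : K) * x ^ ((n : ℤ) - 2 * s)
  have hl : ∀ s ∉ range (l + 1), f s = 0 := fun s hs => by
    rw [mem_range, not_lt] at hs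
    simp [f, intChoose_of_neg (show (l : ℤ) - s < 0 by omega)]
  have hnk : ∀ s ∉ range (n - k + 1), f s = 0 := fun s hs => by
    rw [mem_range, not_lt] at hs
    simp [f, Nat.choose_eq_zero_of_lt (show n - k < s by omega)]
  rw [PpolyGen_eq_sum hx hk hkn, finsetSum_coeff]
  calc Ppoly x n k l = ∑ s ∈ range (l + 1), f s := by
        rw [Ppoly, Int.toNat_natCast]
        refine Finset.sum_congr rfl fun s _ => ?_
        rw [← Nat.cast_sub hkn, intChoose_natCast, Int.cast_natCast]
    _ = ∑ s ∈ range (l + (n - k) + 1), f s :=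
        sum_subset (range_subset_range.2 (by omega)) fun s _ => hl s
    _ = ∑ s ∈ range (n - k + 1), f s :=
        (sum_subset (range_subset_range.2 (by omega)) fun s _ => hnk s).symm
    _ = _ := Finset.sum_congr rfl fun s hs => by
        have : ((n - 1 - s : ℕ) : ℤ) = n - s - 1 := by
          simp only [mem_range] at hs; omega
        rw [coeff_C_mul, coeff_X_pow_mul_one_add_X_pow, this]
        ring

lemma coeff_C_sub_C_mul_X_mul_PpolyGen (hx : x ≠ 0) (hk : 1 ≤ k) (hkn : k ≤ n) (u v : K)
    (t : ℕ) : ((C u - C v * X) * PpolyGen x n k).coeff t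
      = u * Ppoly x n k t - v * Ppoly x n k ((t : ℤ) - 1) := by
  rw [sub_mul, coeff_sub, coeff_C_mul, mul_assoc, coeff_C_mul, Ppoly_eq_coeff_PpolyGen hx hk hkn]
  cases t with
  | zero => simp [Ppoly_of_neg]
  | succ t => simp [coeff_X_mul, Ppoly_eq_coeff_PpolyGen hx hk hkn]

lemma sum_C_mul_PpolyGen_succ (hx : x ≠ 0) (F : K[X]) (n : ℕ) :
    ∑ t ∈ range (n + 1), C ((-1) ^ t * F.coeff t) * PpolyGen x (n + 1) (t + 1)
      = C (x ^ (1 - (n : ℤ))) * MvPolynomial.aeval (PpolyGenPair x) (F.homogenize n) := by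
  rw [aeval_homogenize, mul_sum]
  refine Finset.sum_congr rfl fun t _ => ?_
  have hx' : x ^ (2 * ((t + 1 : ℕ) : ℤ) - (n + 1 : ℕ))
      = x ^ (1 - (n : ℤ)) * (x ^ 2) ^ t := by
    rw [← pow_mul, ← zpow_natCast, ← zpow_add₀ hx]; congr 1; push_cast; ring
  have hA : PpolyGenPair x 0 ^ t = C ((-1) ^ t * (x ^ 2) ^ t) * (1 + X) ^ t := by
    rw [PpolyGenPair, Matrix.cons_val_zero, neg_pow, mul_pow]
    simp only [map_mul, map_pow, map_neg, map_one]
    ring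
  rw [PpolyGen, hA, hx', PpolyGenPair, Matrix.cons_val_one, Matrix.cons_val_zero,
    Nat.add_sub_cancel, Nat.add_sub_add_right, algebraMap_eq]
  simp only [map_mul]
  ring

lemma aeval_homogenize_mul_PpolyGen (hx : x ≠ 0) (hk : 1 ≤ k) (hkn : k ≤ n) {L : K[X]}
    (hL : L.natDegree ≤ 1) :
    MvPolynomial.aeval (PpolyGenPair x) ((L * PpolyGen x n k).homogenize n)
      = C (x ^ n) * (-X) ^ (k - 1) * MvPolynomial.aeval (PpolyGenPair x) (L.homogenize 1) := by
  have h1X : (1 + X : K[X]).natDegree ≤ 1 := by compute_degree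
  have hE : (C (x ^ 2) * (1 + X) - X : K[X]).natDegree ≤ 1 := by compute_degree
  have h := homogenize_mul L _ hL (add_le_add (natDegree_pow_le_of_le (k - 1) h1X)
    (natDegree_pow_le_of_le (n - k) hE) |>.trans' natDegree_mul_le)
  rw [homogenize_mul _ _ (natDegree_pow_le_of_le _ h1X) (natDegree_pow_le_of_le _ hE),
    homogenize_pow h1X, homogenize_pow hE,
    show 1 + ((k - 1) * 1 + (n - k) * 1) = n by omega] at h
  have h1X' : MvPolynomial.aeval (PpolyGenPair x) ((1 + X : K[X]).homogenize 1) = -X := by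
    simp only [homogenize_add, homogenize_one, homogenize_X one_ne_zero, map_add, map_mul,
      map_pow, MvPolynomial.aeval_X, PpolyGenPair, Matrix.cons_val_zero, Matrix.cons_val_one]
    ring
  have hE' : MvPolynomial.aeval (PpolyGenPair x) ((C (x ^ 2) * (1 + X) - X).homogenize 1)
      = C (x ^ 2) := by
    rw [homogenize_sub, homogenize_C_mul, map_sub, map_mul, h1X', homogenize_X one_ne_zero]
    simp only [map_mul, map_pow, MvPolynomial.aeval_X, MvPolynomial.aeval_C, algebraMap_eq,
      PpolyGenPair, Matrix.cons_val_zero, Matrix.cons_val_one]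
    ring
  have hxn : x ^ (2 * (k : ℤ) - n) * (x ^ 2) ^ (n - k) = x ^ n := by
    rw [← pow_mul, ← zpow_natCast, ← zpow_add₀ hx, ← zpow_natCast]
    congr 1; push_cast [Nat.cast_sub hkn]; ring
  rw [PpolyGen, mul_assoc, mul_left_comm, homogenize_C_mul, mul_assoc, h, map_mul, map_mul,
    map_mul, map_pow, map_pow, h1X', hE', MvPolynomial.aeval_C, algebraMap_eq, ← hxn]
  simp only [map_mul, map_pow]
  ring

lemma sum_coeff_mul_PpolyGen_succ (hx : x ≠ 0) (hk : 1 ≤ k) (hkn : k ≤ n) {L : K[X]}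
    (hL : L.natDegree ≤ 1) :
    ∑ t ∈ range (n + 1),
        C ((-1) ^ t * (L * PpolyGen x n k).coeff t) * PpolyGen x (n + 1) (t + 1)
      = C x * (-X) ^ (k - 1) * MvPolynomial.aeval (PpolyGenPair x) (L.homogenize 1) := by
  rw [sum_C_mul_PpolyGen_succ hx, aeval_homogenize_mul_PpolyGen hx hk hkn hL, ← mul_assoc,
    ← mul_assoc, ← C_mul, ← zpow_natCast, ← zpow_add₀ hx, sub_add_cancel, zpow_one]

lemma C_sub_C_mul_X_mul_aeval_homogenize (u v : K) :
    (C u - C v * X) * MvPolynomial.aeval (PpolyGenPair x) ((C u - C v * X).homogenize 1)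
      = C (u * (u + v) * x ^ 2) + C (u ^ 2 * (x ^ 2 - 1) - v ^ 2 * x ^ 2) * X
        - C (v * (u * (x ^ 2 - 1) + v * x ^ 2)) * X ^ 2 := by
  simp only [homogenize_sub, homogenize_C, homogenize_C_mul, homogenize_X one_ne_zero, map_sub,
    map_mul, map_pow, MvPolynomial.aeval_X, MvPolynomial.aeval_C, algebraMap_eq, PpolyGenPair,
    Matrix.cons_val_zero, Matrix.cons_val_one, map_add, map_one]
  ring

end PpolyGen

lemma MXXZ_weights_sq_add {K : Type*} [Field K] {c s ξ : K} (hc : c ≠ 0) (hs : s ≠ 0)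
    (hξ : ξ ≠ 0) (hden : ξ + ξ⁻¹ ≠ 0) :
    ((ξ - ξ⁻¹) / ((ξ + ξ⁻¹) * s)) ^ 2 * s ^ 2 + (2 / ((ξ + ξ⁻¹) * c)) ^ 2 * c ^ 2
      = 1 := by
  rw [div_pow, div_pow, mul_pow, mul_pow, div_mul_eq_mul_div, div_mul_eq_mul_div,
    mul_div_mul_right _ _ (pow_ne_zero 2 hs), mul_div_mul_right _ _ (pow_ne_zero 2 hc),
    ← add_div, div_eq_one_iff_eq (pow_ne_zero 2 hden)]
  linear_combination -4 * mul_inv_cancel₀ hξ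

theorem MXXZ_matrix_element_general {K : Type*} [Field K] (c s ξ : K)
    (hc : c ≠ 0) (hs : s ≠ 0) (hξ : ξ ≠ 0) (hpyth : c ^ 2 + s ^ 2 = 1)
    (hden : ξ + ξ⁻¹ ≠ 0) (n k l : ℕ) (hn : 1 ≤ n) (hk : k ≤ n - 1)
    (hodd : Odd ((k : ℤ) - (l : ℤ))) :
    ∑ t ∈ Finset.range (n + 1),
        (-1 : K) ^ t * MXXZ c s ξ n k (t : ℤ) * MXXZ c s ξ (n + 1) t (l : ℤ)
      = (-1 : K) ^ (k + 1) * c * (if (k : ℤ) = (l : ℤ) - 1 then 1 else 0) := by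
  set α := (ξ - ξ⁻¹) / ((ξ + ξ⁻¹) * s)
  set β := 2 / ((ξ + ξ⁻¹) * c)
  set L : K[X] := C α - C β * X
  have hM : ∀ m j t : ℕ, j < m → MXXZ c s ξ m j t = (L * PpolyGen c m (j + 1)).coeff t :=
    fun m j t hj => by
      rw [coeff_C_sub_C_mul_X_mul_PpolyGen hc (by omega) hj, MXXZ]; push_cast; rfl
  have hq : α ^ 2 * (c ^ 2 - 1) - β ^ 2 * c ^ 2 = -1 := by
    linear_combination α ^ 2 * hpyth - MXXZ_weights_sq_add hc hs hξ hden
  calc _ = (L * ∑ t ∈ range (n + 1), C ((-1) ^ t * (L * PpolyGen c n (k + 1)).coeff t)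
          * PpolyGen c (n + 1) (t + 1)).coeff l := by
        rw [mul_sum, finsetSum_coeff]
        refine Finset.sum_congr rfl fun t ht => ?_
        rw [hM n k t (by omega), hM (n + 1) t l (by simpa using ht), mul_left_comm, coeff_C_mul]
    _ = ((-1) ^ k * c) * (X ^ k * (C (α * (α + β) * c ^ 2) + C (-1) * X
          + C (-(β * (α * (c ^ 2 - 1) + β * c ^ 2))) * X ^ 2)).coeff l := by
        have hL : L.natDegree ≤ 1 := by simp only [L]; compute_degree
        rw [sum_coeff_mul_PpolyGen_succ hc (by omega) (by omega) hL, Nat.add_sub_cancel,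
          mul_left_comm, C_sub_C_mul_X_mul_aeval_homogenize, hq, ← coeff_C_mul]
        congr 1
        simp only [map_mul, map_pow, map_neg, map_one, neg_pow (X : K[X])]
        ring
    _ = _ := by
        rw [coeff_X_pow_mul_quadratic_of_odd _ _ _ hodd]
        split_ifs <;> first | omega | ring

/-- For k − l odd, A_{k,l} = ∑_{t=0}^{n} (−1)^t M_{n;k,t} M_{n+1;t,l} = (−1)^{k+1} c δ_{k,l-1}. -/
theorem MXXZ_matrix_element {K : Type*} [Field K] (c s ξ : K)
    (hc : c ≠ 0) (hs : s ≠ 0) (hξ : ξ ≠ 0) (hpyth : c ^ 2 + s ^ 2 = 1)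
    (hden : ξ + ξ⁻¹ ≠ 0) (n k l : ℕ) (hn : 1 ≤ n) (hk : k ≤ n - 1) (hl : l ≤ n + 1)
    (hodd : Odd ((k : ℤ) - (l : ℤ))) :
    ∑ t ∈ Finset.range (n + 1),
        (-1 : K) ^ t * MXXZ c s ξ n k (t : ℤ) * MXXZ c s ξ (n + 1) t (l : ℤ)
      = (-1 : K) ^ (k + 1) * c * (if (k : ℤ) = (l : ℤ) - 1 then 1 else 0) :=
  MXXZ_matrix_element_general c s ξ hc hs hξ hpyth hden n k l hn hk hodd
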